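/- For every integer n ≥ 2, the set V = {ξ_(n,k) : 1 ≤ k ≤ n−1} is a smallest proper prime subset of the semigroup A^+(B_n): V is a prime subset of A^+(B_n) of cardinality n−1, and every prime subset of A^+(B_n) has at least n−1 elements. -/

import Mathlib

/-- The Brandt semigroup `B_n`, modeled as `Option (Fin n × Fin n)` where
`none` plays the role of the (two-sided) zero element `ϑ`. -/
def Brandt (n : ℕ) : Type := Option (Fin n × Fin n)

instance (n : ℕ) : DecidableEq (Brandt n) :=
  inferInstanceAs (DecidableEq (Option (Fin n × Fin n)))

instance (n : ℕ) : Fintype (Brandt n) :=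
  inferInstanceAs (Fintype (Option (Fin n × Fin n)))

namespace Brandt

/-- The zero element `ϑ` of `B_n`. -/
def theta (n : ℕ) : Brandt n := none

/-- The element `(i, j)` of `B_n`. -/
def pair {n : ℕ} (i j : Fin n) : Brandt n := some (i, j)

/-- The addition of the Brandt semigroup:
`(i,j) + (k,l) = (i,l)` if `j = k` and `ϑ` otherwise; `ϑ` is absorbing. -/
def add {n : ℕ} : Option (Fin n × Fin n) → Option (Fin n × Fin n) → Option (Fin n × Fin n)
  | some (i, j), some (k, l) => if j = k then some (i, l) else none
  | _, _ => none

instance (n : ℕ) : Add (Brandt n) := ⟨fun a b => Brandt.add a b⟩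

end Brandt

/-- `M(B_n)`: all self-maps of `B_n`, with pointwise addition. -/
abbrev MB (n : ℕ) := Brandt n → Brandt n

/-- `g` is an endomorphism of `(B_n, +)`. -/
def IsEndo {n : ℕ} (g : MB n) : Prop := ∀ a b : Brandt n, g (a + b) = g a + g b

/-- `g` is an automorphism of `(B_n, +)`. -/
def IsAuto {n : ℕ} (g : MB n) : Prop := IsEndo g ∧ Function.Bijective g

/-- The constant map `ξ_c` on `B_n` with value `c`. -/
def xi {n : ℕ} (c : Brandt n) : MB n := fun _ => c

/-- `C_{B_n}`, the set of all constant maps on `B_n`. -/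
def ConstMaps (n : ℕ) : Set (MB n) := {f | ∃ c : Brandt n, f = xi c}

/-- `f` is an affine map: a sum of an endomorphism and a constant map. -/
def IsAffine {n : ℕ} (f : MB n) : Prop := ∃ g c, IsEndo g ∧ f = g + xi c

/-- `A^+(B_n)`: the subsemigroup of `(M(B_n), +)` generated by the affine maps. -/
def Aplus (n : ℕ) : AddSubsemigroup (MB n) := AddSubsemigroup.closure {f | IsAffine f}

/-- `A^+(B_n)` as a set of maps. -/
def AplusSet (n : ℕ) : Set (MB n) := (Aplus n : Set (MB n))

/-- The support of `f`: the set of elements not mapped to `ϑ`. -/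
def supp {n : ℕ} (f : MB n) : Set (Brandt n) := {a | f a ≠ Brandt.theta n}

/-- `X_k`: the set of `k`-support elements of `X`. -/
def supportPart {n : ℕ} (X : Set (MB n)) (k : ℕ) : Set (MB n) :=
  {f ∈ X | (supp f).ncard = k}

/-- A subset `U` of an additive semigroup is independent if no element of `U`
lies in the subsemigroup generated by the remaining elements of `U`. -/
def IndepSet {β : Type*} [Add β] (U : Set β) : Prop :=
  ∀ a ∈ U, a ∉ AddSubsemigroup.closure (U \ {a})

/-- The `n`-support map `(p, q; σ)`, sending `(i, p)` to `(iσ, q)` and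
everything else to `ϑ`. -/
def nMap {n : ℕ} (p q : Fin n) (σ : Equiv.Perm (Fin n)) : MB n := fun a =>
  Option.elim (α := Fin n × Fin n) a (Brandt.theta n)
    (fun x => if x.2 = p then Brandt.pair (σ x.1) q else Brandt.theta n)

/-- The singleton support map `⟨(k, l), α⟩`, sending `(k, l)` to `α` and
everything else to `ϑ`. -/
def sMap {n : ℕ} (k l : Fin n) (α : Brandt n) : MB n :=
  fun a => if a = Brandt.pair k l then α else Brandt.theta n

/-- The set `S = {ξ_(i, i+1) : i ∈ [n-1]} ∪ {ξ_(n, 1)}`, i.e. the constant maps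
`ξ_(i, i+1)` where the successor is taken cyclically in `[n]`. -/
def setS (n : ℕ) : Set (MB n) := {f | ∃ i : Fin n, f = xi (Brandt.pair i (finRotate n i))}

/-- The set `T = {g + h : g ∈ Aut(B_n), h ∈ S}`. -/
def setT (n : ℕ) : Set (MB n) := {f | ∃ g h, IsAuto g ∧ h ∈ setS n ∧ f = g + h}
section Aux

variable {n : ℕ}

@[simp] lemma add_theta (a : Brandt n) : a + Brandt.theta n = Brandt.theta n := by
  show Brandt.add a none = none
  rcases a with _ | ⟨i, j⟩ <;> rfl

@[simp] lemma theta_add (a : Brandt n) : Brandt.theta n + a = Brandt.theta n := by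
  show Brandt.add none a = none
  rcases a with _ | ⟨i, j⟩ <;> rfl

lemma pair_add_pair (i j k l : Fin n) :
    Brandt.pair i j + Brandt.pair k l = if j = k then Brandt.pair i l else Brandt.theta n := rfl

lemma mb_add_apply (f g : MB n) (a : Brandt n) : (f + g) a = f a + g a := rfl

lemma xi_apply (c a : Brandt n) : xi c a = c := rfl

lemma xi_add (c d : Brandt n) : xi c + xi d = xi (c + d) := rfl

lemma pair_ne_theta (i j : Fin n) : Brandt.pair i j ≠ Brandt.theta n := by
  simp [Brandt.pair, Brandt.theta]
  exact Option.some_ne_none _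

lemma pair_inj {i j k l : Fin n} (h : Brandt.pair i j = Brandt.pair k l) : i = k ∧ j = l := by
  have h' : (some (i, j) : Option (Fin n × Fin n)) = some (k, l) := h
  simpa [Prod.ext_iff] using h'

lemma xi_inj {c d : Brandt n} (h : (xi c : MB n) = xi d) : c = d := congrFun h (Brandt.theta n)

lemma brandt_cases (a : Brandt n) : a = Brandt.theta n ∨ ∃ i j, a = Brandt.pair i j := by
  rcases a with _ | ⟨i, j⟩
  · exact Or.inl rfl
  · exact Or.inr ⟨i, j, rfl⟩

lemma endo_const (i : Fin n) : IsEndo (xi (Brandt.pair i i) : MB n) := by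
  intro a b
  show Brandt.pair i i = Brandt.pair i i + Brandt.pair i i
  rw [pair_add_pair]; simp

lemma endo_theta : IsEndo (xi (Brandt.theta n) : MB n) := by
  intro a b
  show Brandt.theta n = Brandt.theta n + Brandt.theta n
  rw [theta_add]

lemma xi_mem_Aplus (c : Brandt n) : xi c ∈ AplusSet n := by
  apply AddSubsemigroup.subset_closure
  rcases brandt_cases c with rfl | ⟨i, j, rfl⟩
  · refine ⟨xi (Brandt.theta n), Brandt.theta n, endo_theta, funext fun a => ?_⟩
    show Brandt.theta n = Brandt.theta n + Brandt.theta n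
    rw [theta_add]
  · refine ⟨xi (Brandt.pair i i), Brandt.pair i j, endo_const i, funext fun a => ?_⟩
    show Brandt.pair i j = Brandt.pair i i + Brandt.pair i j
    rw [pair_add_pair]; simp

/-- Property P: a member of `A⁺` either vanishes at `ϑ` or is constant. -/
def PropP (f : MB n) : Prop := f (Brandt.theta n) = Brandt.theta n ∨ ∃ c, f = xi c

lemma endo_structure {g : MB n} (hg : IsEndo g) :
    g (Brandt.theta n) = Brandt.theta n ∨ ∃ i : Fin n, g = xi (Brandt.pair i i) := by
  have h := hg (Brandt.theta n) (Brandt.theta n)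
  rw [theta_add] at h
  rcases brandt_cases (g (Brandt.theta n)) with hθ | ⟨i, j, hθ⟩
  · exact Or.inl hθ
  · rw [hθ, pair_add_pair] at h
    by_cases hji : j = i
    · right
      have hθ' : g (Brandt.theta n) = Brandt.pair i i := by rw [hθ, hji]
      refine ⟨i, funext fun a => ?_⟩
      have h2 := hg a (Brandt.theta n)
      rw [add_theta, hθ'] at h2
      show g a = Brandt.pair i i
      rcases brandt_cases (g a) with ha | ⟨u, v, ha⟩
      · rw [ha, theta_add] at h2
        exact absurd h2 (pair_ne_theta _ _)
      · rw [ha, pair_add_pair] at h2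
        by_cases hvi : v = i
        · rw [if_pos hvi] at h2
          obtain ⟨h3, _⟩ := pair_inj h2
          rw [ha, hvi, ← h3]
        · rw [if_neg hvi] at h2
          exact absurd h2 (pair_ne_theta _ _)
    · rw [if_neg hji] at h
      exact absurd h (pair_ne_theta _ _)

lemma propP_of_mem {f : MB n} (hf : f ∈ AplusSet n) : PropP f := by
  refine AddSubsemigroup.closure_induction (p := fun f _ => PropP f) ?_ ?_ hf
  · rintro f ⟨g, c, hg, rfl⟩
    rcases endo_structure hg with hθ | ⟨i, rfl⟩
    · left
      rw [mb_add_apply, hθ, theta_add]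
    · exact Or.inr ⟨Brandt.pair i i + c, rfl⟩
  · rintro f g _ _ pf pg
    rcases pf with hf | ⟨c, rfl⟩
    · left; rw [mb_add_apply, hf, theta_add]
    · rcases pg with hg | ⟨d, rfl⟩
      · left; rw [mb_add_apply, hg, xi_apply, add_theta]
      · exact Or.inr ⟨c + d, rfl⟩

/-- Property Q: all nonzero values of a member of `A⁺` lie in a single "column". -/
def PropQ (f : MB n) : Prop :=
  ∃ q : Fin n, ∀ a, f a = Brandt.theta n ∨ ∃ u, f a = Brandt.pair u q

lemma propQ_of_mem (hn : 0 < n) {f : MB n} (hf : f ∈ AplusSet n) : PropQ f := by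
  refine AddSubsemigroup.closure_induction (p := fun f _ => PropQ f) ?_ ?_ hf
  · rintro f ⟨g, c, hg, rfl⟩
    rcases brandt_cases c with rfl | ⟨u, v, rfl⟩
    · exact ⟨⟨0, hn⟩, fun a => Or.inl (by rw [mb_add_apply, xi_apply, add_theta])⟩
    · refine ⟨v, fun a => ?_⟩
      rw [mb_add_apply, xi_apply]
      rcases brandt_cases (g a) with ha | ⟨x, y, ha⟩
      · rw [ha, theta_add]; exact Or.inl rfl
      · rw [ha, pair_add_pair]
        by_cases hyu : y = u
        · rw [if_pos hyu]; exact Or.inr ⟨x, rfl⟩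
        · rw [if_neg hyu]; exact Or.inl rfl
  · rintro f g _ _ _ ⟨qg, hg⟩
    refine ⟨qg, fun a => ?_⟩
    rw [mb_add_apply]
    rcases hg a with hga | ⟨u, hga⟩
    · rw [hga, add_theta]; exact Or.inl rfl
    · rw [hga]
      rcases brandt_cases (f a) with hfa | ⟨x, y, hfa⟩
      · rw [hfa, theta_add]; exact Or.inl rfl
      · rw [hfa, pair_add_pair]
        by_cases hyu : y = u
        · rw [if_pos hyu]; exact Or.inr ⟨x, rfl⟩
        · rw [if_neg hyu]; exact Or.inl rfl


lemma ncard_compl_singleton (m₀ : Fin n) : ({m₀}ᶜ : Set (Fin n)).ncard = n - 1 := by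
  have h3 := Set.ncard_add_ncard_compl ({m₀} : Set (Fin n))
  rw [Set.ncard_singleton] at h3
  have h4 : Nat.card (Fin n) = n := by simp
  omega

lemma add_mem_Aplus {f g : MB n} (hf : f ∈ AplusSet n) (hg : g ∈ AplusSet n) :
    f + g ∈ AplusSet n := AddSubsemigroup.add_mem _ hf hg

lemma ncard_lower_bound (U : Set (MB n)) (m₀ : Fin n) (c : Fin n → MB n)
    (hmem : ∀ m, m ≠ m₀ → c m ∈ U)
    (hinj : ∀ m m', m ≠ m₀ → m' ≠ m₀ → c m = c m' → m = m') :
    n - 1 ≤ U.ncard := by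
  have hsub : c '' ({m₀}ᶜ : Set (Fin n)) ⊆ U := by
    rintro _ ⟨m, hm, rfl⟩
    exact hmem m hm
  have h1 : (c '' ({m₀}ᶜ : Set (Fin n))).ncard = ({m₀}ᶜ : Set (Fin n)).ncard :=
    Set.ncard_image_of_injOn fun x hx y hy h => hinj x y hx hy h
  have h2 : ({m₀}ᶜ : Set (Fin n)).ncard = n - 1 := by
    have h3 := Set.ncard_add_ncard_compl ({m₀} : Set (Fin n))
    rw [Set.ncard_singleton] at h3
    have h4 : Nat.card (Fin n) = n := by simp
    omega
  calc n - 1 = (c '' ({m₀}ᶜ : Set (Fin n))).ncard := by rw [h1, h2]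
    _ ≤ U.ncard := Set.ncard_le_ncard hsub (Set.toFinite U)

end Aux

/-- For `n ≥ 2`, the set `V = {ξ_(n,k) : 1 ≤ k ≤ n−1}` is a
smallest proper prime subset of `A⁺(Bₙ)`: it is a proper prime subset of
cardinality `n − 1`, and every prime subset of `A⁺(Bₙ)` has at least `n − 1`
elements. -/
theorem stmt_18 (n : ℕ) (hn : 2 ≤ n) :
    ∀ V : Set (MB n),
      V = {f | ∃ k : Fin n, k ≠ ⟨n - 1, by omega⟩ ∧
        f = xi (Brandt.pair ⟨n - 1, by omega⟩ k)} →
      (V.Nonempty ∧ V ⊆ AplusSet n ∧ V ≠ AplusSet n ∧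
        (∀ f ∈ AplusSet n, ∀ g ∈ AplusSet n, f + g ∈ V → f ∈ V ∨ g ∈ V)) ∧
      V.ncard = n - 1 ∧
      (∀ U : Set (MB n), U.Nonempty → U ⊆ AplusSet n →
        (∀ f ∈ AplusSet n, ∀ g ∈ AplusSet n, f + g ∈ U → f ∈ U ∨ g ∈ U) →
        n - 1 ≤ U.ncard) := by
  classical
  have hnpos : 0 < n := by omega
  intro V hV
  subst hV
  refine ⟨⟨?_, ?_, ?_, ?_⟩, ?_, ?_⟩
  · -- Nonempty
    refine ⟨xi (Brandt.pair ⟨n - 1, by omega⟩ ⟨0, hnpos⟩), ⟨0, hnpos⟩, ?_, rfl⟩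
    intro h
    have := congrArg Fin.val h
    simp at this
    omega
  · -- subset of AplusSet
    rintro f ⟨k, hk, rfl⟩
    exact xi_mem_Aplus _
  · -- proper
    intro h
    have hθ : xi (Brandt.theta n) ∈ {f | ∃ k : Fin n, k ≠ ⟨n - 1, by omega⟩ ∧
        f = xi (Brandt.pair ⟨n - 1, by omega⟩ k)} := by
      rw [h]; exact xi_mem_Aplus _
    obtain ⟨k, hk, heq⟩ := hθ
    exact pair_ne_theta _ _ (xi_inj heq).symm
  · -- prime
    intro f hf g hg hfg
    obtain ⟨k, hk, heq⟩ := hfg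
    rcases propP_of_mem hf with hfθ | ⟨c, rfl⟩
    · exfalso
      have h1 := congrFun heq (Brandt.theta n)
      rw [mb_add_apply, hfθ, theta_add, xi_apply] at h1
      exact pair_ne_theta _ _ h1.symm
    rcases propP_of_mem hg with hgθ | ⟨d, rfl⟩
    · exfalso
      have h1 := congrFun heq (Brandt.theta n)
      rw [mb_add_apply, hgθ, xi_apply, add_theta, xi_apply] at h1
      exact pair_ne_theta _ _ h1.symm
    have hcd : c + d = Brandt.pair ⟨n - 1, by omega⟩ k := by
      have h1 := congrFun heq (Brandt.theta n)
      rw [mb_add_apply, xi_apply, xi_apply, xi_apply] at h1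
      exact h1
    rcases brandt_cases c with rfl | ⟨c1, c2, rfl⟩
    · rw [theta_add] at hcd
      exact absurd hcd.symm (pair_ne_theta _ _)
    rcases brandt_cases d with rfl | ⟨d1, d2, rfl⟩
    · rw [add_theta] at hcd
      exact absurd hcd.symm (pair_ne_theta _ _)
    rw [pair_add_pair] at hcd
    by_cases h12 : c2 = d1
    · rw [if_pos h12] at hcd
      obtain ⟨hc1, hd2⟩ := pair_inj hcd
      by_cases hc2 : c2 = (⟨n - 1, by omega⟩ : Fin n)
      · right
        exact ⟨k, hk, by rw [hd2, ← h12, hc2]⟩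
      · left
        exact ⟨c2, hc2, by rw [hc1]⟩
    · rw [if_neg h12] at hcd
      exact absurd hcd.symm (pair_ne_theta _ _)
  · -- cardinality
    have himg : {f | ∃ k : Fin n, k ≠ ⟨n - 1, by omega⟩ ∧
        f = xi (Brandt.pair ⟨n - 1, by omega⟩ k)} =
        (fun k => xi (Brandt.pair (⟨n - 1, by omega⟩ : Fin n) k)) ''
          ({(⟨n - 1, by omega⟩ : Fin n)}ᶜ) := by
      ext f
      constructor
      · rintro ⟨k, hk, rfl⟩; exact ⟨k, hk, rfl⟩
      · rintro ⟨k, hk, rfl⟩; exact ⟨k, hk, rfl⟩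
    rw [himg, Set.ncard_image_of_injOn fun x _ y _ h => (pair_inj (xi_inj h)).2,
      ncard_compl_singleton]
  · -- lower bound
    intro U hUne hUsub hUprime
    obtain ⟨f, hfU⟩ := hUne
    have hfA := hUsub hfU
    obtain ⟨q, hQ⟩ := propQ_of_mem hnpos hfA
    by_cases hfθ : ∀ a, f a = Brandt.theta n
    · -- f is the zero constant
      have h01 : (⟨0, hnpos⟩ : Fin n) ≠ ⟨1, by omega⟩ := by
        intro h
        have := congrArg Fin.val h
        simp at this
      have hdec : ∀ m : Fin n,
          xi (Brandt.pair m ⟨0, hnpos⟩) + xi (Brandt.pair ⟨1, by omega⟩ m) = f := by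
        intro m
        funext a
        rw [mb_add_apply, xi_apply, xi_apply, pair_add_pair, if_neg h01, hfθ a]
      have hd : ∀ m : Fin n,
          xi (Brandt.pair m ⟨0, hnpos⟩) ∈ U ∨ xi (Brandt.pair ⟨1, by omega⟩ m) ∈ U :=
        fun m => hUprime _ (xi_mem_Aplus _) _ (xi_mem_Aplus _) (by rw [hdec m]; exact hfU)
      refine ncard_lower_bound U ⟨0, hnpos⟩
        (fun m => if xi (Brandt.pair m ⟨0, hnpos⟩) ∈ U then xi (Brandt.pair m ⟨0, hnpos⟩)
          else xi (Brandt.pair ⟨1, by omega⟩ m)) ?_ ?_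
      · intro m hm
        by_cases h : xi (Brandt.pair m ⟨0, hnpos⟩) ∈ U
        · simp only [if_pos h]; exact h
        · simp only [if_neg h]; exact (hd m).resolve_left h
      · intro m m' hm hm' hcc
        by_cases h1 : xi (Brandt.pair m ⟨0, hnpos⟩) ∈ U <;>
          by_cases h2 : xi (Brandt.pair m' ⟨0, hnpos⟩) ∈ U
        · simp only [if_pos h1, if_pos h2] at hcc
          exact (pair_inj (xi_inj hcc)).1
        · simp only [if_pos h1, if_neg h2] at hcc
          exact absurd (pair_inj (xi_inj hcc)).2.symm hm'
        · simp only [if_neg h1, if_pos h2] at hcc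
          exact absurd (pair_inj (xi_inj hcc)).2 hm
        · simp only [if_neg h1, if_neg h2] at hcc
          exact (pair_inj (xi_inj hcc)).2
    · -- f has a nonzero value
      push_neg at hfθ
      obtain ⟨a₀, ha₀⟩ := hfθ
      obtain ⟨u₀, hu₀⟩ := (hQ a₀).resolve_left ha₀
      have hdec : ∀ m : Fin n, (f + xi (Brandt.pair q m)) + xi (Brandt.pair m q) = f := by
        intro m
        funext a
        rcases hQ a with ha | ⟨u, ha⟩
        · rw [mb_add_apply, mb_add_apply, xi_apply, xi_apply, ha, theta_add, theta_add]
        · rw [mb_add_apply, mb_add_apply, xi_apply, xi_apply, ha, pair_add_pair, if_pos rfl,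
            pair_add_pair, if_pos rfl]
      have hmemA : ∀ m : Fin n, f + xi (Brandt.pair q m) ∈ AplusSet n :=
        fun m => add_mem_Aplus hfA (xi_mem_Aplus _)
      have hval : ∀ m : Fin n, (f + xi (Brandt.pair q m)) a₀ = Brandt.pair u₀ m := by
        intro m
        rw [mb_add_apply, xi_apply, hu₀, pair_add_pair, if_pos rfl]
      have hd : ∀ m : Fin n, (f + xi (Brandt.pair q m)) ∈ U ∨ xi (Brandt.pair m q) ∈ U :=
        fun m => hUprime _ (hmemA m) _ (xi_mem_Aplus _) (by rw [hdec m]; exact hfU)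
      refine ncard_lower_bound U q
        (fun m => if (f + xi (Brandt.pair q m)) ∈ U then f + xi (Brandt.pair q m)
          else xi (Brandt.pair m q)) ?_ ?_
      · intro m hm
        by_cases h : (f + xi (Brandt.pair q m)) ∈ U
        · simp only [if_pos h]; exact h
        · simp only [if_neg h]; exact (hd m).resolve_left h
      · intro m m' hm hm' hcc
        by_cases h1 : (f + xi (Brandt.pair q m)) ∈ U <;>
          by_cases h2 : (f + xi (Brandt.pair q m')) ∈ U
        · simp only [if_pos h1, if_pos h2] at hcc
          have h3 := congrFun hcc a₀
          rw [hval m, hval m'] at h3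
          exact (pair_inj h3).2
        · simp only [if_pos h1, if_neg h2] at hcc
          have h3 := congrFun hcc a₀
          rw [hval m, xi_apply] at h3
          exact absurd (pair_inj h3).2 hm
        · simp only [if_neg h1, if_pos h2] at hcc
          have h3 := congrFun hcc a₀
          rw [hval m', xi_apply] at h3
          exact absurd (pair_inj h3.symm).2 hm'
        · simp only [if_neg h1, if_neg h2] at hcc
          exact (pair_inj (xi_inj hcc)).1
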